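/- Let b : ℝ → ℝ be Lipschitz continuous with Lipschitz constant C > 0, and for ε > 0 let b_ε(x) = ∫_ℝ b(x⁰) ψ_ε(x⁰ − x) dx⁰ be its Gaussian mollification. Then b_ε is twice differentiable and its second derivative satisfies the uniform bound |b_ε''(x)| ≤ C √(2/π) / ε for all x ∈ ℝ; together with |b_ε'(x)| ≤ C, the mollification b_ε has bounded derivatives of order one and two for each fixed ε > 0. -/

import Mathlib

open MeasureTheory Real

/-- The Gaussian kernel with variance `ε²`. -/
noncomputable def gaussKernel (ε y : ℝ) : ℝ :=
  (1 / Real.sqrt (2 * Real.pi * ε ^ 2)) * Real.exp (-(y ^ 2) / (2 * ε ^ 2))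

/-- The Gaussian mollification `b_ε` of `b`. -/
noncomputable def gaussMollify (ε : ℝ) (b : ℝ → ℝ) (x : ℝ) : ℝ :=
  ∫ x0 : ℝ, b x0 * gaussKernel ε (x0 - x)

/-!
Writing `b_ε(x) = ∫ b(u + x) ψ_ε(u) du` shows that `b_ε` inherits the Lipschitz constant `C` of `b`,
because `∫ ψ_ε = 1`. Differentiation under the integral sign is legitimate since `b` grows at most
linearly while `ψ_ε`, `ψ_ε'` and `ψ_ε''` have Gaussian decay, and it gives
`b_ε'(x) = -∫ b(x⁰) ψ_ε'(x⁰ - x) dx⁰`. The same translation argument shows that `b_ε'` is Lipschitz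
with constant `C ∫ |ψ_ε'| = C √(2/π) / ε`, and a Lipschitz constant bounds the derivative.
-/

open Filter
open scoped NNReal

lemma exp_neg_mul_sq_sub_le {c x x₀ : ℝ} (hc : 0 ≤ c) (hx : |x - x₀| ≤ 1) (a : ℝ) :
    exp (-c * (a - x) ^ 2) ≤ exp c * exp (-(c / 2) * (a - x₀) ^ 2) := by
  rw [← exp_add, exp_le_exp]
  have : (x - x₀) ^ 2 ≤ 1 := by nlinarith [sq_abs (x - x₀), abs_nonneg (x - x₀)]
  nlinarith [sq_nonneg (a - x + (x - x₀)), sq_nonneg (a - x - (x - x₀))]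

lemma abs_mul_exp_neg_mul_sq_le {c : ℝ} (hc : 0 < c) (t : ℝ) :
    |t| * exp (-c * t ^ 2) ≤ (1 + 2 / c) * exp (-(c / 2) * t ^ 2) := by
  have hsplit : exp (-c * t ^ 2) = exp (-(c / 2) * t ^ 2) * exp (-(c / 2) * t ^ 2) := by
    rw [← exp_add]; ring_nf
  have hsq : t ^ 2 * exp (-(c / 2) * t ^ 2) ≤ 2 / c := by
    have := add_one_le_exp (c / 2 * t ^ 2)
    rw [neg_mul, exp_neg, ← div_eq_mul_inv, div_le_iff₀ (exp_pos _)]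
    rw [div_mul_eq_mul_div, le_div_iff₀ hc]
    nlinarith
  have habs : |t| ≤ 1 + t ^ 2 := by nlinarith [sq_abs t, abs_nonneg t, sq_nonneg (|t| - 1)]
  have hle1 : exp (-(c / 2) * t ^ 2) ≤ 1 := exp_le_one_iff.2 (by nlinarith [sq_nonneg t])
  have hE := (exp_pos (-(c / 2) * t ^ 2)).le
  rw [hsplit]
  nlinarith [mul_le_mul_of_nonneg_right habs (mul_nonneg hE hE)]

lemma integrable_abs_mul_exp_neg_mul_sq_sub {c : ℝ} (hc : 0 < c) (x : ℝ) :
    Integrable (fun a => |a| * exp (-c * (a - x) ^ 2)) := by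
  have h : Integrable (fun u => (u + x) * exp (-c * u ^ 2)) := by
    simp_rw [add_mul]
    exact (integrable_mul_exp_neg_mul_sq hc).add ((integrable_exp_neg_mul_sq hc).const_mul x)
  simpa [abs_mul, abs_of_pos (exp_pos _)] using h.abs.comp_sub_right x

lemma integral_Ioi_mul_exp_neg_mul_sq {c : ℝ} (hc : 0 < c) :
    ∫ t in Set.Ioi (0 : ℝ), t * exp (-c * t ^ 2) = (2 * c)⁻¹ := by
  have h := integral_mul_cexp_neg_mul_sq (b := (c : ℂ)) (by simpa using hc)
  have hreal : ∫ t in Set.Ioi (0 : ℝ), (t : ℂ) * Complex.exp (-c * t ^ 2)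
      = ((∫ t in Set.Ioi (0 : ℝ), t * exp (-c * t ^ 2) : ℝ) : ℂ) := by
    rw [← integral_complex_ofReal]
    push_cast
    rfl
  rw [hreal] at h
  exact_mod_cast h

lemma integral_abs_mul_exp_neg_mul_sq {c : ℝ} (hc : 0 < c) :
    ∫ t, |t| * exp (-c * t ^ 2) = c⁻¹ := by
  have := integral_comp_abs (f := fun t => t * exp (-c * t ^ 2))
  simp only [sq_abs] at this
  rw [this, integral_Ioi_mul_exp_neg_mul_sq hc]
  field_simp

def HasGaussianDecay (k : ℝ → ℝ) : Prop :=
  ∃ K c : ℝ, 0 < c ∧ ∀ t, |k t| ≤ K * exp (-c * t ^ 2)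

lemma LipschitzWith.abs_le_add_mul {b : ℝ → ℝ} {C : ℝ≥0} (hb : LipschitzWith C b) (a : ℝ) :
    |b a| ≤ |b 0| + C * |a| := by
  have := hb.dist_le_mul a 0
  rw [Real.dist_eq, Real.dist_eq, sub_zero] at this
  linarith [abs_sub_abs_le_abs_sub (b a) (b 0)]

namespace HasGaussianDecay

variable {k l : ℝ → ℝ}

lemma const_mul (hk : HasGaussianDecay k) (r : ℝ) : HasGaussianDecay fun t => r * k t := by
  obtain ⟨K, c, hc, hK⟩ := hk
  refine ⟨|r| * K, c, hc, fun t => ?_⟩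
  rw [abs_mul, mul_assoc]
  exact mul_le_mul_of_nonneg_left (hK t) (abs_nonneg r)

lemma add (hk : HasGaussianDecay k) (hl : HasGaussianDecay l) :
    HasGaussianDecay fun t => k t + l t := by
  obtain ⟨K, c, hc, hK⟩ := hk
  obtain ⟨L, d, hd, hL⟩ := hl
  have hK0 : 0 ≤ K := nonneg_of_mul_nonneg_left ((abs_nonneg _).trans (hK 0)) (exp_pos _)
  have hL0 : 0 ≤ L := nonneg_of_mul_nonneg_left ((abs_nonneg _).trans (hL 0)) (exp_pos _)
  have hexp : ∀ e, min c d ≤ e → ∀ t, exp (-e * t ^ 2) ≤ exp (-min c d * t ^ 2) :=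
    fun e he t => exp_le_exp.2 (by nlinarith [sq_nonneg t])
  refine ⟨K + L, min c d, lt_min hc hd, fun t => ?_⟩
  calc |k t + l t| ≤ K * exp (-c * t ^ 2) + L * exp (-d * t ^ 2) :=
        (abs_add_le _ _).trans (add_le_add (hK t) (hL t))
    _ ≤ (K + L) * exp (-min c d * t ^ 2) := by
        rw [add_mul]
        exact add_le_add (mul_le_mul_of_nonneg_left (hexp c (min_le_left c d) t) hK0)
          (mul_le_mul_of_nonneg_left (hexp d (min_le_right c d) t) hL0)

lemma id_mul (hk : HasGaussianDecay k) : HasGaussianDecay fun t => t * k t := by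
  obtain ⟨K, c, hc, hK⟩ := hk
  have hK0 : 0 ≤ K := nonneg_of_mul_nonneg_left ((abs_nonneg _).trans (hK 0)) (exp_pos _)
  refine ⟨K * (1 + 2 / c), c / 2, half_pos hc, fun t => ?_⟩
  calc |t * k t| ≤ K * (|t| * exp (-c * t ^ 2)) := by
        rw [abs_mul, mul_left_comm]
        exact mul_le_mul_of_nonneg_left (hK t) (abs_nonneg t)
    _ ≤ K * (1 + 2 / c) * exp (-(c / 2) * t ^ 2) := by
        rw [mul_assoc]
        exact mul_le_mul_of_nonneg_left (abs_mul_exp_neg_mul_sq_le hc t) hK0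

lemma integrable (hk : HasGaussianDecay k) (hk_cont : Continuous k) : Integrable k := by
  obtain ⟨K, c, hc, hK⟩ := hk
  exact ((integrable_exp_neg_mul_sq hc).const_mul K).mono' hk_cont.aestronglyMeasurable
    (Eventually.of_forall hK)

lemma integrable_mul_comp_sub {b : ℝ → ℝ} {A B : ℝ} (hb : AEStronglyMeasurable b)
    (hb_growth : ∀ a, |b a| ≤ A + B * |a|) (hk : HasGaussianDecay k) (hk_cont : Continuous k)
    (x : ℝ) : Integrable fun a => b a * k (a - x) := by
  obtain ⟨K, c, hc, hK⟩ := hk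
  have hdom : Integrable fun a =>
      K * (A * exp (-c * (a - x) ^ 2) + B * (|a| * exp (-c * (a - x) ^ 2))) :=
    ((((integrable_exp_neg_mul_sq hc).comp_sub_right x).const_mul A).add
      ((integrable_abs_mul_exp_neg_mul_sq_sub hc x).const_mul B)).const_mul K
  refine hdom.mono' (hb.mul (hk_cont.comp (continuous_sub_right x)).aestronglyMeasurable)
    (Eventually.of_forall fun a => ?_)
  rw [Real.norm_eq_abs, abs_mul]
  calc |b a| * |k (a - x)| ≤ (A + B * |a|) * (K * exp (-c * (a - x) ^ 2)) :=
        mul_le_mul (hb_growth a) (hK _) (abs_nonneg _) ((abs_nonneg _).trans (hb_growth a))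
    _ = _ := by ring

lemma hasDerivAt_integral_mul_comp_sub {b k' : ℝ → ℝ} {A B : ℝ} (hb : AEStronglyMeasurable b)
    (hb_growth : ∀ a, |b a| ≤ A + B * |a|) (hk : HasGaussianDecay k)
    (hk' : HasGaussianDecay k') (hderiv : ∀ t, HasDerivAt k (k' t) t) (hk'_cont : Continuous k')
    (x₀ : ℝ) :
    HasDerivAt (fun x => ∫ a, b a * k (a - x)) (-∫ a, b a * k' (a - x₀)) x₀ := by
  have hk_cont : Continuous k := continuous_iff_continuousAt.2 fun t => (hderiv t).continuousAt
  obtain ⟨K, c, hc, hK⟩ := hk'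
  have hK0 : 0 ≤ K := nonneg_of_mul_nonneg_left ((abs_nonneg _).trans (hK 0)) (exp_pos _)
  set g : ℝ → ℝ := fun t => K * exp c * exp (-(c / 2) * t ^ 2)
  have hg : HasGaussianDecay g :=
    ⟨K * exp c, c / 2, half_pos hc, fun t => (abs_of_nonneg (by positivity)).le⟩
  have hdom : Integrable fun a => |b a| * g (a - x₀) :=
    integrable_mul_comp_sub (continuous_abs.comp_aestronglyMeasurable hb)
      (by simpa using hb_growth) hg (by fun_prop) x₀
  have hbound : ∀ a, ∀ x ∈ Metric.ball x₀ 1, ‖b a * -k' (a - x)‖ ≤ |b a| * g (a - x₀) := by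
    intro a x hx
    rw [Real.norm_eq_abs, abs_mul, abs_neg]
    refine mul_le_mul_of_nonneg_left ((hK _).trans ?_) (abs_nonneg _)
    rw [show g (a - x₀) = K * (exp c * exp (-(c / 2) * (a - x₀) ^ 2)) from mul_assoc _ _ _]
    exact mul_le_mul_of_nonneg_left
      (exp_neg_mul_sq_sub_le hc.le (le_of_lt (by simpa [Real.dist_eq] using hx)) a) hK0
  have hdiff : ∀ a x, HasDerivAt (fun x => b a * k (a - x)) (b a * -k' (a - x)) x := fun a x => by
    simpa using ((hderiv (a - x)).comp x ((hasDerivAt_id x).const_sub a)).const_mul (b a)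
  simp_rw [← integral_neg, ← mul_neg]
  exact (hasDerivAt_integral_of_dominated_loc_of_deriv_le (Metric.ball_mem_nhds x₀ one_pos)
    (Eventually.of_forall fun x =>
      hb.mul (hk_cont.comp (continuous_sub_right x)).aestronglyMeasurable)
    (integrable_mul_comp_sub hb hb_growth hk hk_cont x₀)
    (hb.mul (hk'_cont.comp (continuous_sub_right x₀)).neg.aestronglyMeasurable)
    (Eventually.of_forall hbound) hdom (Eventually.of_forall fun a x _ => hdiff a x)).2

lemma lipschitzWith_integral_mul_comp_sub {b : ℝ → ℝ} {C : ℝ≥0} (hb : LipschitzWith C b)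
    (hk : HasGaussianDecay k) (hk_cont : Continuous k) :
    LipschitzWith (C * (∫ t, |k t|).toNNReal) fun x => ∫ a, b a * k (a - x) := by
  have hshift : ∀ x, ∫ a, b a * k (a - x) = ∫ u, b (u + x) * k u := fun x => by
    simpa using (integral_add_right_eq_self (fun a => b a * k (a - x)) x).symm
  have hint : ∀ x, Integrable fun u => b (u + x) * k u := fun x => by
    simpa using (hk.integrable_mul_comp_sub hb.continuous.aestronglyMeasurable hb.abs_le_add_mul
      hk_cont x).comp_add_right x
  refine LipschitzWith.of_dist_le_mul fun x y => ?_
  rw [Real.dist_eq, Real.dist_eq, hshift, hshift, ← integral_sub (hint x) (hint y), NNReal.coe_mul,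
    Real.coe_toNNReal _ (integral_nonneg fun _ => abs_nonneg _), ← Real.norm_eq_abs]
  calc ‖∫ u, (b (u + x) * k u - b (u + y) * k u)‖ ≤ ∫ u, C * |x - y| * |k u| := by
        refine norm_integral_le_of_norm_le ((hk.integrable hk_cont).abs.const_mul _)
          (Eventually.of_forall fun u => ?_)
        have := hb.dist_le_mul (u + x) (u + y)
        rw [Real.dist_eq, Real.dist_eq, add_sub_add_left_eq_sub] at this
        rw [Real.norm_eq_abs, ← sub_mul, abs_mul]
        exact mul_le_mul_of_nonneg_right this (abs_nonneg _)
    _ = C * (∫ t, |k t|) * |x - y| := by rw [integral_const_mul]; ring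

end HasGaussianDecay

noncomputable def gaussKernelDeriv (ε t : ℝ) : ℝ := -(t / ε ^ 2) * gaussKernel ε t

noncomputable def gaussKernelDeriv2 (ε t : ℝ) : ℝ := (t ^ 2 / ε ^ 4 - 1 / ε ^ 2) * gaussKernel ε t

section GaussKernel

variable {ε : ℝ}

lemma gaussKernel_eq (t : ℝ) :
    gaussKernel ε t = (√(2 * π * ε ^ 2))⁻¹ * exp (-(2 * ε ^ 2)⁻¹ * t ^ 2) := by
  rw [gaussKernel, one_div]
  congr 2
  ring

lemma gaussKernel_nonneg (t : ℝ) : 0 ≤ gaussKernel ε t := by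
  rw [gaussKernel_eq]; positivity

lemma hasDerivAt_gaussKernel (t : ℝ) : HasDerivAt (gaussKernel ε) (gaussKernelDeriv ε t) t := by
  rw [show gaussKernel ε = _ from funext gaussKernel_eq]
  refine ((((hasDerivAt_pow 2 t).const_mul (-(2 * ε ^ 2)⁻¹)).exp).const_mul
    (√(2 * π * ε ^ 2))⁻¹).congr_deriv ?_
  rw [gaussKernelDeriv, gaussKernel_eq]
  by_cases hε : ε = 0
  · simp [hε]
  · field_simp
    ring

lemma hasDerivAt_gaussKernelDeriv (t : ℝ) :
    HasDerivAt (gaussKernelDeriv ε) (gaussKernelDeriv2 ε t) t := by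
  refine (((hasDerivAt_id' t).div_const (ε ^ 2)).neg.mul (hasDerivAt_gaussKernel t)).congr_deriv ?_
  simp only [gaussKernelDeriv2, gaussKernelDeriv, Pi.neg_apply]
  by_cases hε : ε = 0
  · simp [hε]
  · field_simp
    ring

lemma continuous_gaussKernel : Continuous (gaussKernel ε) := by
  unfold gaussKernel; fun_prop

lemma continuous_gaussKernelDeriv : Continuous (gaussKernelDeriv ε) := by
  unfold gaussKernelDeriv gaussKernel; fun_prop

lemma continuous_gaussKernelDeriv2 : Continuous (gaussKernelDeriv2 ε) := by
  unfold gaussKernelDeriv2 gaussKernel; fun_prop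

lemma hasGaussianDecay_gaussKernel (hε : ε ≠ 0) : HasGaussianDecay (gaussKernel ε) :=
  ⟨(√(2 * π * ε ^ 2))⁻¹, (2 * ε ^ 2)⁻¹, by positivity, fun t => by
    rw [abs_of_nonneg (gaussKernel_nonneg t), gaussKernel_eq]⟩

lemma hasGaussianDecay_gaussKernelDeriv (hε : ε ≠ 0) : HasGaussianDecay (gaussKernelDeriv ε) := by
  convert (hasGaussianDecay_gaussKernel hε).id_mul.const_mul (-(ε ^ 2)⁻¹) using 2 with t
  rw [gaussKernelDeriv]
  ring

lemma hasGaussianDecay_gaussKernelDeriv2 (hε : ε ≠ 0) :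
    HasGaussianDecay (gaussKernelDeriv2 ε) := by
  have hψ := hasGaussianDecay_gaussKernel hε
  convert (hψ.id_mul.id_mul.const_mul (ε ^ 4)⁻¹).add (hψ.const_mul (-(ε ^ 2)⁻¹)) using 2 with t
  rw [gaussKernelDeriv2]
  ring

lemma integral_abs_gaussKernel (hε : ε ≠ 0) : ∫ t, |gaussKernel ε t| = 1 := by
  simp_rw [abs_of_nonneg (gaussKernel_nonneg _), gaussKernel_eq]
  rw [integral_const_mul, integral_gaussian, div_inv_eq_mul,
    show π * (2 * ε ^ 2) = 2 * π * ε ^ 2 by ring, inv_mul_cancel₀ (by positivity)]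

lemma integral_abs_gaussKernelDeriv (hε : 0 < ε) :
    ∫ t, |gaussKernelDeriv ε t| = √(2 / π) / ε := by
  have habs : ∀ t, |gaussKernelDeriv ε t|
      = (ε ^ 2)⁻¹ * (√(2 * π * ε ^ 2))⁻¹ * (|t| * exp (-(2 * ε ^ 2)⁻¹ * t ^ 2)) := fun t => by
    rw [gaussKernelDeriv, abs_mul, abs_neg, abs_div, abs_of_pos (by positivity : 0 < ε ^ 2),
      abs_of_nonneg (gaussKernel_nonneg t), gaussKernel_eq]
    ring
  have hsqrt : √(2 / π) * √(2 * π * ε ^ 2) = 2 * ε := by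
    rw [← sqrt_mul (by positivity), show 2 / π * (2 * π * ε ^ 2) = (2 * ε) ^ 2 by
      field_simp, sqrt_sq (by positivity)]
  simp_rw [habs]
  rw [integral_const_mul, integral_abs_mul_exp_neg_mul_sq (by positivity), inv_inv,
    eq_div_iff hε.ne', ← mul_left_inj' (sqrt_ne_zero'.2 (by positivity : 0 < 2 * π * ε ^ 2)),
    mul_right_comm _ ε, mul_assoc, hsqrt]
  field_simp

end GaussKernel

section GaussMollify

variable {ε : ℝ} {b : ℝ → ℝ} {C : ℝ≥0}

lemma hasDerivAt_gaussMollify (hb : LipschitzWith C b) (hε : ε ≠ 0) (x : ℝ) :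
    HasDerivAt (gaussMollify ε b) (-∫ a, b a * gaussKernelDeriv ε (a - x)) x :=
  (hasGaussianDecay_gaussKernel hε).hasDerivAt_integral_mul_comp_sub
    hb.continuous.aestronglyMeasurable hb.abs_le_add_mul (hasGaussianDecay_gaussKernelDeriv hε)
    hasDerivAt_gaussKernel continuous_gaussKernelDeriv x

lemma deriv_gaussMollify (hb : LipschitzWith C b) (hε : ε ≠ 0) :
    deriv (gaussMollify ε b) = fun x => -∫ a, b a * gaussKernelDeriv ε (a - x) :=
  funext fun x => (hasDerivAt_gaussMollify hb hε x).deriv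

lemma hasDerivAt_deriv_gaussMollify (hb : LipschitzWith C b) (hε : ε ≠ 0) (x : ℝ) :
    HasDerivAt (deriv (gaussMollify ε b)) (∫ a, b a * gaussKernelDeriv2 ε (a - x)) x := by
  rw [deriv_gaussMollify hb hε, ← neg_neg (∫ a, b a * gaussKernelDeriv2 ε (a - x))]
  exact ((hasGaussianDecay_gaussKernelDeriv hε).hasDerivAt_integral_mul_comp_sub
    hb.continuous.aestronglyMeasurable hb.abs_le_add_mul (hasGaussianDecay_gaussKernelDeriv2 hε)
    hasDerivAt_gaussKernelDeriv continuous_gaussKernelDeriv2 x).neg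

lemma lipschitzWith_gaussMollify (hb : LipschitzWith C b) (hε : ε ≠ 0) :
    LipschitzWith C (gaussMollify ε b) := by
  have := (hasGaussianDecay_gaussKernel hε).lipschitzWith_integral_mul_comp_sub hb
    continuous_gaussKernel
  rwa [integral_abs_gaussKernel hε, Real.toNNReal_one, mul_one] at this

lemma lipschitzWith_deriv_gaussMollify (hb : LipschitzWith C b) (hε : 0 < ε) :
    LipschitzWith (C * (√(2 / π) / ε).toNNReal) (deriv (gaussMollify ε b)) := by
  rw [deriv_gaussMollify hb hε.ne', ← integral_abs_gaussKernelDeriv hε]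
  exact ((hasGaussianDecay_gaussKernelDeriv hε.ne').lipschitzWith_integral_mul_comp_sub hb
    continuous_gaussKernelDeriv).neg

end GaussMollify

theorem gaussMollify_second_deriv_bound_general (b : ℝ → ℝ) (C : ℝ)
    (hLip : ∀ x y : ℝ, |b x - b y| ≤ C * |x - y|) (ε : ℝ) (hε : 0 < ε) :
    (∀ x : ℝ, DifferentiableAt ℝ (gaussMollify ε b) x) ∧
      (∀ x : ℝ, DifferentiableAt ℝ (deriv (gaussMollify ε b)) x) ∧
      (∀ x : ℝ, |deriv (gaussMollify ε b) x| ≤ C) ∧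
      (∀ x : ℝ, |deriv (deriv (gaussMollify ε b)) x| ≤ C * Real.sqrt (2 / Real.pi) / ε) := by
  have hC : 0 ≤ C := by simpa using (abs_nonneg _).trans (hLip 1 0)
  have hb : LipschitzWith C.toNNReal b := LipschitzWith.of_dist_le_mul fun x y => by
    simpa only [Real.dist_eq, Real.coe_toNNReal _ hC] using hLip x y
  refine ⟨fun x => (hasDerivAt_gaussMollify hb hε.ne' x).differentiableAt,
    fun x => (hasDerivAt_deriv_gaussMollify hb hε.ne' x).differentiableAt, fun x => ?_, fun x => ?_⟩
  · simpa [Real.coe_toNNReal _ hC] using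
      norm_deriv_le_of_lipschitz (x₀ := x) (lipschitzWith_gaussMollify hb hε.ne')
  · have := norm_deriv_le_of_lipschitz (x₀ := x) (lipschitzWith_deriv_gaussMollify hb hε)
    rwa [NNReal.coe_mul, Real.coe_toNNReal _ hC, Real.coe_toNNReal _ (by positivity),
      ← mul_div_assoc] at this

/-- the Gaussian mollification of a `C`-Lipschitz function is twice
differentiable, its first derivative is bounded by `C`, and its second derivative is
bounded by `C √(2/π) / ε`. -/
theorem gaussMollify_second_deriv_bound (b : ℝ → ℝ) (C : ℝ) (hC : 0 < C)
    (hLip : ∀ x y : ℝ, |b x - b y| ≤ C * |x - y|) (ε : ℝ) (hε : 0 < ε) :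
    (∀ x : ℝ, DifferentiableAt ℝ (gaussMollify ε b) x) ∧
      (∀ x : ℝ, DifferentiableAt ℝ (deriv (gaussMollify ε b)) x) ∧
      (∀ x : ℝ, |deriv (gaussMollify ε b) x| ≤ C) ∧
      (∀ x : ℝ, |deriv (deriv (gaussMollify ε b)) x| ≤ C * Real.sqrt (2 / Real.pi) / ε) :=
  gaussMollify_second_deriv_bound_general b C hLip ε hε
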